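/- Let I = ∫_{T³} dt/w₁(0̄,t) ∈ (0,∞), γ = 6, and μ₀ = √6 · I^{-1/2}. Then for every k ∈ T³ and every z > 18, the quantity Δ_{μ₀}(k; z) = ε(k) + 6 - z - μ₀² ∫_{T³} dt/(w₁(k,t) - z) is strictly negative. -/

import Mathlib

open MeasureTheory Real Filter

noncomputable def eps (k : EuclideanSpace ℝ (Fin 3)) : ℝ := ∑ i, (1 - Real.cos (k i))

noncomputable def w1 (k p : EuclideanSpace ℝ (Fin 3)) : ℝ :=
  eps k + eps ((1 / 2 : ℝ) • (k + p)) + eps p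

def T3 : Set (EuclideanSpace ℝ (Fin 3)) := {k | ∀ i, k i ∈ Set.Ioc (-Real.pi) Real.pi}

noncomputable def pibar : EuclideanSpace ℝ (Fin 3) := WithLp.toLp 2 (fun _ => Real.pi)

noncomputable def I0 : ℝ := ∫ t in T3, (w1 (0 : EuclideanSpace ℝ (Fin 3)) t)⁻¹

noncomputable def mu0 : ℝ := Real.sqrt 6 / Real.sqrt I0

/-!
Since `ε(k) ≤ 6` and `z > 18`, it suffices to show `∫_{T³} (z - w₁(k,t))⁻¹ dt ≤ I`. Translation
by `π̄` on the torus maps `T³` onto itself preserving measure; on each orthant it is the ordinary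
translation by a vector with entries `±π`. Writing `u` for the image of `t`, one has
`w₁(k,t) + w₁(0,u) ≤ 18` coordinate by coordinate (`cos u = -cos t`, `cos (u/2) = |sin (t/2)|`),
so `(z - w₁(k,t))⁻¹ ≤ w₁(0,u)⁻¹` and integrating gives the bound.
-/

open Set

lemma one_sub_cos_sum_le_six {k t u : ℝ} (hk : 0 ≤ cos (k / 2)) (ht : 0 ≤ cos (t / 2))
    (hu : cos u = -cos t) (hu2 : |sin (t / 2)| ≤ cos (u / 2)) :
    (1 - cos k) + (1 - cos ((k + t) / 2)) + (1 - cos t) + (1 - cos (u / 2)) + (1 - cos u) ≤ 6 := by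
  -- the left side is `6 - 2 cos²(k/2) - cos(k/2) cos(t/2) + sin(k/2) sin(t/2) - cos(u/2)`
  have hck : cos k = 2 * cos (k / 2) ^ 2 - 1 := by
    rw [← cos_two_mul, mul_div_cancel₀ _ two_ne_zero]
  have hckt : cos ((k + t) / 2) = cos (k / 2) * cos (t / 2) - sin (k / 2) * sin (t / 2) := by
    rw [add_div, cos_add]
  have hsin : sin (k / 2) * sin (t / 2) ≤ |sin (t / 2)| :=
    calc sin (k / 2) * sin (t / 2) ≤ |sin (k / 2)| * |sin (t / 2)| := by
          rw [← abs_mul]; exact le_abs_self _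
      _ ≤ |sin (t / 2)| := mul_le_of_le_one_left (abs_nonneg _) (abs_sin_le_one _)
  rw [hck, hckt, hu]
  nlinarith [mul_nonneg hk ht]

def halfIoc (b : Bool) : Set ℝ := if b then Ioc 0 π else Ioc (-π) 0

noncomputable def signedPi (b : Bool) : ℝ := if b then π else -π

lemma sub_signedPi_mem_halfIoc_not {b : Bool} {t : ℝ} :
    t - signedPi b ∈ halfIoc (!b) ↔ t ∈ halfIoc b := by
  cases b <;> simp only [halfIoc, signedPi, Bool.not_false, Bool.not_true, if_true, if_false,
    Bool.false_eq_true, mem_Ioc] <;> constructor <;> rintro ⟨h₁, h₂⟩ <;> constructor <;> linarith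

lemma halfIoc_subset_Ioc (b : Bool) : halfIoc b ⊆ Ioc (-π) π := by
  cases b <;> rintro t ⟨h₁, h₂⟩ <;> constructor <;> linarith [pi_pos]

lemma cos_sub_signedPi (b : Bool) (t : ℝ) : cos (t - signedPi b) = -cos t := by
  cases b <;> simp [signedPi, cos_sub_pi, cos_add_pi]

lemma cos_half_sub_signedPi {b : Bool} {t : ℝ} (ht : t ∈ halfIoc b) :
    cos ((t - signedPi b) / 2) = |sin (t / 2)| := by
  cases b <;> obtain ⟨h₁, h₂⟩ := ht
  · rw [signedPi, if_neg Bool.false_ne_true, sub_neg_eq_add, add_div, cos_add_pi_div_two,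
      abs_of_nonpos (sin_nonpos_of_nonpos_of_neg_pi_le (by linarith) (by linarith))]
  · rw [signedPi, if_pos rfl, sub_div, cos_sub_pi_div_two,
      abs_of_nonneg (sin_nonneg_of_nonneg_of_le_pi (by linarith) (by linarith))]

section Orthant

variable {ι : Type*}

def orthant (σ : ι → Bool) : Set (EuclideanSpace ℝ ι) := {t | ∀ i, t i ∈ halfIoc (σ i)}

/-- On `orthant σ`, subtracting `orthantShift σ` is the translation by `π̄` of the torus
`ℝ^ι / 2πℤ^ι`, read in the fundamental domain `(-π, π]^ι`; it lands in the opposite orthant. -/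
noncomputable def orthantShift (σ : ι → Bool) : EuclideanSpace ℝ ι :=
  WithLp.toLp 2 fun i => signedPi (σ i)

lemma measurableSet_orthant [Countable ι] (σ : ι → Bool) : MeasurableSet (orthant σ) := by
  simp only [orthant, ofPred_forall]
  refine MeasurableSet.iInter fun i => measurableSet_preimage (by fun_prop) ?_
  cases σ i <;> exact measurableSet_Ioc

lemma pairwise_disjoint_orthant : Pairwise (Function.onFun Disjoint (orthant (ι := ι))) := by
  intro σ τ hστ
  obtain ⟨i, hi⟩ := Function.ne_iff.mp hστ
  refine disjoint_left.mpr fun t hσ hτ => ?_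
  have hσi := hσ i
  have hτi := hτ i
  cases hσ' : σ i <;> cases hτ' : τ i <;> simp only [hσ', hτ', halfIoc] at hσi hτi hi <;>
    first | exact hi rfl | linarith [hσi.1, hσi.2, hτi.1, hτi.2]

lemma iUnion_orthant : ⋃ σ, orthant σ = {t : EuclideanSpace ℝ ι | ∀ i, t i ∈ Ioc (-π) π} := by
  refine Subset.antisymm (iUnion_subset fun σ t ht i => halfIoc_subset_Ioc _ (ht i)) fun t ht => ?_
  refine mem_iUnion.mpr ⟨fun i => decide (0 < t i), fun i => ?_⟩
  by_cases h : 0 < t i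
  · simpa [halfIoc, h] using (ht i).2
  · simpa [halfIoc, h] using ⟨(ht i).1, not_lt.mp h⟩

lemma preimage_sub_orthantShift (σ : ι → Bool) :
    (· - orthantShift σ) ⁻¹' orthant (fun i => !σ i) = orthant σ := by
  ext t
  exact forall_congr' fun i => sub_signedPi_mem_halfIoc_not

variable [Fintype ι]

lemma integrableOn_orthant_comp_sub_orthantShift {f : EuclideanSpace ℝ ι → ℝ}
    (hf : IntegrableOn f {t | ∀ i, t i ∈ Ioc (-π) π}) (σ : ι → Bool) :
    IntegrableOn (fun t => f (t - orthantShift σ)) (orthant σ) := by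
  rw [← preimage_sub_orthantShift]
  exact ((measurePreserving_sub_right volume _).integrableOn_comp_preimage
    (measurableEmbedding_subRight _)).mpr (hf.mono_set (iUnion_orthant ▸ subset_iUnion _ _))

lemma setIntegral_cube_eq_sum_orthant [DecidableEq ι] {f : EuclideanSpace ℝ ι → ℝ}
    (hf : IntegrableOn f {t | ∀ i, t i ∈ Ioc (-π) π}) :
    ∫ t in {t | ∀ i, t i ∈ Ioc (-π) π}, f t = ∑ σ, ∫ t in orthant σ, f t := by
  rw [← iUnion_orthant] at hf ⊢
  exact integral_iUnion_fintype measurableSet_orthant pairwise_disjoint_orthant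
    fun σ => hf.mono_set (subset_iUnion _ σ)

lemma sum_setIntegral_orthant_comp_sub_orthantShift [DecidableEq ι] {f : EuclideanSpace ℝ ι → ℝ}
    (hf : IntegrableOn f {t | ∀ i, t i ∈ Ioc (-π) π}) :
    ∑ σ, ∫ t in orthant σ, f (t - orthantShift σ) = ∫ t in {t | ∀ i, t i ∈ Ioc (-π) π}, f t := by
  have hshift (σ : ι → Bool) :
      ∫ t in orthant σ, f (t - orthantShift σ) = ∫ t in orthant (fun i => !σ i), f t := by
    rw [← (measurePreserving_sub_right volume (orthantShift σ)).setIntegral_preimage_emb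
      (measurableEmbedding_subRight _) f, preimage_sub_orthantShift]
  have hnot : Function.Involutive fun (σ : ι → Bool) i => !σ i :=
    fun σ => funext fun i => Bool.not_not (σ i)
  simp only [hshift, setIntegral_cube_eq_sum_orthant hf]
  exact Equiv.sum_comp (hnot.toPerm _) fun σ => ∫ t in orthant σ, f t

end Orthant

local notation "V" => EuclideanSpace ℝ (Fin 3)

lemma eps_nonneg (k : V) : 0 ≤ eps k :=
  Finset.sum_nonneg fun _ _ => sub_nonneg.mpr (cos_le_one _)

lemma eps_le_six (k : V) : eps k ≤ 6 :=
  calc eps k ≤ ∑ _i : Fin 3, (2 : ℝ) :=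
        Finset.sum_le_sum fun i _ => by linarith [neg_one_le_cos (k i)]
    _ = 6 := by norm_num

lemma w1_le_eighteen (k t : V) : w1 k t ≤ 18 := by
  unfold w1
  linarith [eps_le_six k, eps_le_six ((1 / 2 : ℝ) • (k + t)), eps_le_six t]

lemma eps_pos_of_mem_T3 {u : V} (hu : u ∈ T3) (hu0 : u ≠ 0) : 0 < eps u := by
  obtain ⟨j, hj⟩ : ∃ j, u j ≠ 0 := by
    by_contra! h
    exact hu0 (by ext i; simpa using h i)
  refine Finset.sum_pos' (fun i _ => sub_nonneg.mpr (cos_le_one _)) ⟨j, Finset.mem_univ _, ?_⟩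
  obtain ⟨hj₁, hj₂⟩ := hu j
  refine sub_pos.mpr ((cos_le_one _).lt_of_ne fun h => hj ?_)
  exact (cos_eq_one_iff_of_lt_of_lt (by linarith [pi_pos]) (by linarith [pi_pos])).mp h

lemma w1_zero_pos {u : V} (hu : u ∈ T3) (hu0 : u ≠ 0) : 0 < w1 0 u := by
  have h0 : eps 0 = 0 := by simp [eps]
  unfold w1
  linarith [eps_nonneg ((1 / 2 : ℝ) • (0 + u)), eps_pos_of_mem_T3 hu hu0]

lemma w1_eq_sum (k t : V) :
    w1 k t = ∑ i, ((1 - cos (k i)) + (1 - cos ((k i + t i) / 2)) + (1 - cos (t i))) := by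
  simp only [w1, eps, ← Finset.sum_add_distrib, PiLp.smul_apply, PiLp.add_apply, smul_eq_mul]
  congr! 4
  rw [one_div_mul_eq_div]

lemma cos_half_nonneg_of_mem_Ioc {x : ℝ} (hx : x ∈ Ioc (-π) π) : 0 ≤ cos (x / 2) :=
  cos_nonneg_of_neg_pi_div_two_le_of_le (by linarith [hx.1]) (by linarith [hx.2])

lemma w1_add_w1_zero_sub_orthantShift_le {k t : V} (hk : k ∈ T3) {σ : Fin 3 → Bool}
    (ht : t ∈ orthant σ) : w1 k t + w1 0 (t - orthantShift σ) ≤ 18 := by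
  rw [w1_eq_sum, w1_eq_sum, ← Finset.sum_add_distrib]
  calc _ ≤ ∑ _i : Fin 3, (6 : ℝ) := Finset.sum_le_sum fun i _ => ?_
    _ = 18 := by norm_num
  have key := one_sub_cos_sum_le_six (cos_half_nonneg_of_mem_Ioc (hk i))
    (cos_half_nonneg_of_mem_Ioc (halfIoc_subset_Ioc _ (ht i))) (cos_sub_signedPi (σ i) (t i))
    (cos_half_sub_signedPi (ht i)).ge
  simp only [PiLp.zero_apply, PiLp.sub_apply, orthantShift, zero_add, cos_zero, sub_self]
  linarith

lemma volume_T3_lt_top : volume T3 < ⊤ := by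
  refine Bornology.IsBounded.measure_lt_top ?_
  rw [Bornology.isBounded_induced]
  refine (Bornology.IsBounded.pi fun _ => Metric.isBounded_Ioc (-π) π).subset ?_
  rintro _ ⟨x, hx, rfl⟩ i -
  exact hx i

lemma integrableOn_inv_sub_w1 (k : V) {z : ℝ} (hz : 18 < z) :
    IntegrableOn (fun t => (z - w1 k t)⁻¹) T3 := by
  have hw : Continuous (w1 k) := by unfold w1 eps; fun_prop
  refine IntegrableOn.of_bound volume_T3_lt_top
    (measurable_const.sub hw.measurable).inv.aestronglyMeasurable (z - 18)⁻¹ (ae_of_all _ fun t => ?_)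
  have h18 := w1_le_eighteen k t
  rw [norm_inv, norm_of_nonneg (by linarith)]
  exact inv_anti₀ (by linarith) (by linarith)

lemma setIntegral_inv_sub_w1_le_I0 {k : V} (hk : k ∈ T3) {z : ℝ} (hz : 18 < z)
    (hI : IntegrableOn (fun t => (w1 0 t)⁻¹) T3) : ∫ t in T3, (z - w1 k t)⁻¹ ≤ I0 := by
  have hg := integrableOn_inv_sub_w1 k hz
  unfold I0 T3 at *
  rw [← sum_setIntegral_orthant_comp_sub_orthantShift hI, setIntegral_cube_eq_sum_orthant hg]
  refine Finset.sum_le_sum fun σ _ => setIntegral_mono_on_ae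
    (hg.mono_set (iUnion_orthant ▸ subset_iUnion _ σ))
    (integrableOn_orthant_comp_sub_orthantShift hI σ) (measurableSet_orthant σ) ?_
  filter_upwards [compl_mem_ae_iff.mpr (measure_singleton (orthantShift σ))] with t hne ht
  have hu : t - orthantShift σ ∈ T3 := by
    rw [← preimage_sub_orthantShift] at ht
    exact iUnion_orthant.subset (mem_iUnion_of_mem _ ht)
  exact inv_anti₀ (w1_zero_pos hu (sub_ne_zero.mpr hne))
    (by linarith [w1_add_w1_zero_sub_orthantShift_le hk ht])

lemma mu0_sq_mul_setIntegral_inv_sub_w1_le {k : V} (hk : k ∈ T3) {z : ℝ} (hz : 18 < z) :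
    mu0 ^ 2 * ∫ t in T3, (z - w1 k t)⁻¹ ≤ 6 := by
  -- `I0 ≤ 0` covers the junk value `0` of a divergent integral; then `mu0 = √6 / 0 = 0`
  rcases le_or_gt I0 0 with hI | hI
  · have hmu : mu0 = 0 := by rw [mu0, sqrt_eq_zero'.mpr hI, div_zero]
    simp [hmu]
  · have hInt : IntegrableOn (fun t => (w1 0 t)⁻¹) T3 := Integrable.of_integral_ne_zero hI.ne'
    have hmu : mu0 ^ 2 = 6 / I0 := by
      rw [mu0, div_pow, sq_sqrt (by norm_num), sq_sqrt hI.le]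
    calc mu0 ^ 2 * ∫ t in T3, (z - w1 k t)⁻¹ ≤ 6 / I0 * I0 := by
          rw [hmu]; gcongr; exact setIntegral_inv_sub_w1_le_I0 hk hz hInt
      _ = 6 := div_mul_cancel₀ _ hI.ne'

theorem stmt17 :
    ∀ k ∈ T3, ∀ z : ℝ, 18 < z →
      eps k + 6 - z - mu0 ^ 2 * (∫ t in T3, (w1 k t - z)⁻¹) < 0 := by
  intro k hk z hz
  have hflip : ∫ t in T3, (w1 k t - z)⁻¹ = -∫ t in T3, (z - w1 k t)⁻¹ := by
    rw [← integral_neg]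
    simp_rw [← inv_neg, neg_sub]
  rw [hflip]
  linarith [eps_le_six k, mu0_sq_mul_setIntegral_inv_sub_w1_le hk hz]
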